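/- Let G be a weak framework for a matroid M and let H be a theta-subgraph of G. If two of the three cycles of H are balanced, then so is the third. -/

import Mathlib

open Set Matroid
open scoped Classical

namespace QuasiGraphicPaper

universe u v

/-- A finite multigraph: a set `V` of vertices (in an ambient type `α`), a set `E` of
edges (in an ambient type `β`), and an incidence function assigning to each edge an
unordered pair of endpoints; loop-edges and parallel edges are allowed. -/
structure Graph (α : Type u) (β : Type v) where
  V : Set α
  E : Set β
  ends : β → Sym2 α
  finV : V.Finite
  finE : E.Finite
  ends_mem : ∀ ⦃e⦄, e ∈ E → ∀ ⦃x⦄, x ∈ ends e → x ∈ V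

namespace Graph

variable {α : Type u} {β : Type v}

/-- `e` is a loop-edge of `G` at the vertex `v`. -/
def IsLoopAt (G : Graph α β) (e : β) (v : α) : Prop :=
  e ∈ G.E ∧ G.ends e = Sym2.diag v

/-- `loops_G(v)`: the set of loop-edges of `G` at `v`. -/
def loopsAt (G : Graph α β) (v : α) : Set β := {e | G.IsLoopAt e v}

/-- Two vertices are adjacent if some edge of `G` has them as its two endpoints. -/
def Adj (G : Graph α β) (u v : α) : Prop := ∃ e ∈ G.E, G.ends e = s(u, v)

/-- A graph is connected if any two of its vertices are joined by a walk.
(The graph with no vertices is connected.) -/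
def Connected (G : Graph α β) : Prop :=
  ∀ u ∈ G.V, ∀ v ∈ G.V, Relation.ReflTransGen G.Adj u v

/-- Delete a set `X` of vertices: remove the vertices in `X` and all edges meeting `X`. -/
def deleteVertices (G : Graph α β) (X : Set α) : Graph α β where
  V := G.V \ X
  E := {e ∈ G.E | ∀ x ∈ G.ends e, x ∉ X}
  ends := G.ends
  finV := G.finV.sdiff
  finE := G.finE.subset (sep_subset _ _)
  ends_mem := fun e he x hx => ⟨G.ends_mem he.1 hx, he.2 x hx⟩

/-- `G − v`: delete the single vertex `v`. -/
abbrev deleteVertex (G : Graph α β) (v : α) : Graph α β := G.deleteVertices {v}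

/-- `G − e`: delete the edge `e` (keeping all vertices). -/
def deleteEdge (G : Graph α β) (e : β) : Graph α β where
  V := G.V
  E := G.E \ {e}
  ends := G.ends
  finV := G.finV
  finE := G.finE.sdiff
  ends_mem := fun f hf x hx => G.ends_mem hf.1 hx

/-- `G[X]`: the subgraph of `G` with edge set `X` (intersected with `E(G)`) and
no isolated vertices. -/
def restrictEdges (G : Graph α β) (X : Set β) : Graph α β where
  V := {v | ∃ e ∈ X ∩ G.E, v ∈ G.ends e}
  E := X ∩ G.E
  ends := G.ends
  finV := G.finV.subset (by rintro v ⟨e, ⟨-, he⟩, hv⟩; exact G.ends_mem he hv)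
  finE := G.finE.subset inter_subset_right
  ends_mem := fun e he x hx => ⟨e, he, hx⟩

/-- The connected component of `G` containing the vertex `v`, as a graph. -/
def componentOf (G : Graph α β) (v : α) : Graph α β where
  V := {u ∈ G.V | Relation.ReflTransGen G.Adj v u}
  E := {e ∈ G.E | ∀ x ∈ G.ends e, Relation.ReflTransGen G.Adj v x}
  ends := G.ends
  finV := G.finV.subset (sep_subset _ _)
  finE := G.finE.subset (sep_subset _ _)
  ends_mem := fun e he x hx => ⟨G.ends_mem he.1 hx, he.2 x hx⟩

/-- `H` is a connected component of `G`. -/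
def IsComponentOf (H G : Graph α β) : Prop := ∃ v ∈ G.V, H = G.componentOf v

/-- The number of connected components of `G`. -/
noncomputable def ncomponents (G : Graph α β) : ℕ :=
  {H : Graph α β | H.IsComponentOf G}.ncard

/-- `G` has at most two connected components: among any three vertices, two are joined. -/
def AtMostTwoComponents (G : Graph α β) : Prop :=
  ∀ u ∈ G.V, ∀ v ∈ G.V, ∀ w ∈ G.V,
    Relation.ReflTransGen G.Adj u v ∨ Relation.ReflTransGen G.Adj u w ∨
      Relation.ReflTransGen G.Adj v w

/-- The degree of a vertex: loop-edges count twice. -/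
noncomputable def degree (G : Graph α β) (v : α) : ℕ :=
  ({e ∈ G.E | v ∈ G.ends e ∧ ¬ (G.ends e).IsDiag}).ncard +
    2 * ({e ∈ G.E | G.ends e = Sym2.diag v}).ncard

/-- `G` is a cycle: it is connected, has at least one edge, and every vertex has
degree two. -/
def IsCycleGraph (G : Graph α β) : Prop :=
  G.E.Nonempty ∧ G.Connected ∧ ∀ v ∈ G.V, G.degree v = 2

/-- `C` is (the edge set of) a cycle of `G`. -/
def CycleSet (G : Graph α β) (C : Set β) : Prop :=
  C ⊆ G.E ∧ (G.restrictEdges C).IsCycleGraph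

/-- A forest: a graph with no cycles (in particular no loop-edges). -/
def IsForest (G : Graph α β) : Prop := ∀ C, ¬ G.CycleSet C

/-- `H` is a subgraph of `G`. -/
def IsSubgraph (H G : Graph α β) : Prop := H.V ⊆ G.V ∧ H.E ⊆ G.E ∧ H.ends = G.ends

/-- `G` is `k`-connected if `G − X` is connected for every vertex set `X` with `|X| < k`. -/
def KConnected (G : Graph α β) (k : ℕ) : Prop :=
  ∀ X : Set α, X.encard < k → (G.deleteVertices X).Connected

/-- A theta: a `2`-connected graph with exactly two vertices of degree three, all
other vertices having degree two. -/
def IsTheta (H : Graph α β) : Prop :=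
  H.KConnected 2 ∧
    ∃ a ∈ H.V, ∃ b ∈ H.V, a ≠ b ∧ H.degree a = 3 ∧ H.degree b = 3 ∧
      ∀ v ∈ H.V, v ≠ a → v ≠ b → H.degree v = 2

/-- `G / e`: contract the non-loop edge `e` with endpoints `x` and `y`
(identifying `y` with `x` and deleting `e`). -/
noncomputable def contractEdge (G : Graph α β) (e : β) (x y : α) (he : e ∈ G.E)
    (hxy : G.ends e = s(x, y)) (hne : x ≠ y) : Graph α β where
  V := G.V \ {y}
  E := G.E \ {e}
  ends := fun f => (G.ends f).map (fun w => if w = y then x else w)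
  finV := G.finV.sdiff
  finE := G.finE.sdiff
  ends_mem := by
    rintro f ⟨hf, -⟩ z hz
    rw [Sym2.mem_map] at hz
    obtain ⟨w, hw, rfl⟩ := hz
    by_cases hwy : w = y
    · rw [if_pos hwy]
      have hx : x ∈ G.ends e := by rw [hxy]; exact Sym2.mem_mk_left x y
      exact ⟨G.ends_mem he hx, by simp [hne]⟩
    · rw [if_neg hwy]
      exact ⟨G.ends_mem hf hw, by simp [hwy]⟩

/-- `G ∘ e`: for a loop-edge `e` at a vertex `v` which is the unique loop-edge at `v`,
delete `v` and `e`, and replace every other edge `f = vw` at `v` by a loop-edge at `w`. -/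
noncomputable def circ (G : Graph α β) (e : β) (v : α)
    (hno : ∀ f ∈ G.E, G.ends f = Sym2.diag v → f = e) : Graph α β where
  V := G.V \ {v}
  E := G.E \ {e}
  ends := fun f =>
    if h : f ∈ G.E ∧ f ≠ e ∧ v ∈ G.ends f then Sym2.diag (Sym2.Mem.other h.2.2)
    else G.ends f
  finV := G.finV.sdiff
  finE := G.finE.sdiff
  ends_mem := by
    rintro f ⟨hf, hfe⟩ z hz
    have hfe' : f ≠ e := fun h' => hfe (by simp [h'])
    by_cases h : f ∈ G.E ∧ f ≠ e ∧ v ∈ G.ends f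
    · rw [dif_pos h] at hz
      have hze : z = Sym2.Mem.other h.2.2 := by
        have h2 : z ∈ s(Sym2.Mem.other h.2.2, Sym2.Mem.other h.2.2) := hz
        rw [Sym2.mem_iff] at h2
        tauto
      subst hze
      refine ⟨G.ends_mem hf (Sym2.other_mem h.2.2), ?_⟩
      simp only [mem_singleton_iff]
      intro hzv
      apply h.2.1
      apply hno f hf
      show G.ends f = s(v, v)
      rw [← Sym2.other_spec h.2.2, hzv]
    · rw [dif_neg h] at hz
      refine ⟨G.ends_mem hf hz, ?_⟩
      simp only [mem_singleton_iff]
      intro hzv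
      subst hzv
      exact h ⟨hf, hfe', hz⟩

end Graph

/-! ### Matroid notions -/

variable {α : Type u} {β : Type v}

/-- The rank `r_M(X)` of a set `X` in a matroid `M`: the maximum size of an
independent subset of `X`. -/
noncomputable def rank (M : Matroid β) (X : Set β) : ℕ :=
  (⨆ I ∈ {I : Set β | M.Indep I ∧ I ⊆ X}, I.encard).toNat

/-- `C` is a circuit of `M` : a minimal dependent set. -/
def IsCircuit (M : Matroid β) (C : Set β) : Prop :=
  M.Dep C ∧ ∀ D, D ⊂ C → M.Indep D

/-- `M \ D` : delete the set `D` from the matroid `M`. -/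
def deleteM (M : Matroid β) (D : Set β) : Matroid β := M ↾ (M.E \ D)

/-- `M / C` : contract the set `C` in the matroid `M`. -/
def contractM (M : Matroid β) (C : Set β) : Matroid β := (M✶ ↾ (M✶.E \ C))✶

/-- `G` is a weak framework for `M`: conditions (1)–(3). -/
def WeakFramework (G : Graph α β) (M : Matroid β) : Prop :=
  G.E = M.E ∧
  (∀ H : Graph α β, H.IsComponentOf G → rank M H.E ≤ H.V.ncard) ∧
  (∀ v ∈ G.V,
    M.closure (G.deleteVertex v).E ⊆ (G.deleteVertex v).E ∪ G.loopsAt v)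

/-- `G` is a framework for `M`: conditions (1)–(4). -/
def Framework (G : Graph α β) (M : Matroid β) : Prop :=
  WeakFramework G M ∧
    ∀ C, IsCircuit M C → (G.restrictEdges C).AtMostTwoComponents

/-- `M` is the cycle matroid `M(G)` of `G` : the ground set of `M` is `E(G)`, and the
circuits of `M` are exactly the edge sets of cycles of `G`. -/
def IsCycleMatroidOf (G : Graph α β) (M : Matroid β) : Prop :=
  M.E = G.E ∧ ∀ C, IsCircuit M C ↔ G.CycleSet C

/-- A matroid is graphic if it is the cycle matroid of some graph. -/
def Graphic (M : Matroid β) : Prop :=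
  ∃ (γ : Type v) (G : Graph γ β), IsCycleMatroidOf G M

/-- A matroid is quasi-graphic if it has a framework. -/
def QuasiGraphic (M : Matroid β) : Prop :=
  ∃ (γ : Type v) (G : Graph γ β), Framework G M

/-- `M` is a lift of `N` if some single-element extension `M'` of `M` satisfies
`M' \ e = M` and `M' / e = N`. -/
def IsLiftOf (M N : Matroid β) : Prop :=
  ∃ M' : Matroid (Option β), (none : Option β) ∈ M'.E ∧
    deleteM M' {none} = M.map some (Option.some_injective β).injOn ∧
    contractM M' {none} = N.map some (Option.some_injective β).injOn

/-- `M` is a lifted-graphic matroid: for some single-element extension `M'` of `M`,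
`M' / e` is graphic. -/
def LiftedGraphic (M : Matroid β) : Prop :=
  ∃ M' : Matroid (Option β), (none : Option β) ∈ M'.E ∧
    deleteM M' {none} = M.map some (Option.some_injective β).injOn ∧
    Graphic (contractM M' {none})

/-- `(M, V)` is a framed matroid: `V` is a basis of `M` and every element of `M` is
spanned by a subset of `V` with at most two elements. -/
def FramedMatroid {γ : Type u} (M : Matroid γ) (V : Set γ) : Prop :=
  M.IsBase V ∧ ∀ e ∈ M.E, ∃ S ⊆ V, S.ncard ≤ 2 ∧ e ∈ M.closure S

/-- `M` is a frame matroid: `M = M' \ V` for some framed matroid `(M', V)`. -/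
def FrameMatroid (M : Matroid β) : Prop :=
  ∃ (γ : Type v) (M' : Matroid (β ⊕ γ)) (V : Set (β ⊕ γ)),
    FramedMatroid M' V ∧
      deleteM M' V = M.map Sum.inl Sum.inl_injective.injOn

/-- `M` is `3`-connected: it has no `k`-separation for `k ≤ 2`. -/
def ThreeConnected (M : Matroid β) : Prop :=
  ∀ X ⊆ M.E, ∀ k : ℕ, k ≤ 2 → (k : ℕ∞) ≤ X.encard → (k : ℕ∞) ≤ (M.E \ X).encard →
    rank M M.E + k ≤ rank M X + rank M (M.E \ X)

/-- `M` is representable over some field. -/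
def Representable (M : Matroid β) : Prop :=
  ∃ (F : Type v) (_ : Field F) (W : Type v) (_ : AddCommGroup W) (_ : Module F W)
    (φ : β → W), ∀ I ⊆ M.E, (M.Indep I ↔ LinearIndependent F (fun x : I => φ x))

/-- A collection `B` of cycles of `G` satisfies the theta-property if there is no
theta-subgraph of `G` with exactly two of its three cycles in `B`. -/
def ThetaProperty (G : Graph α β) (B : Set (Set β)) : Prop :=
  ∀ H : Graph α β, H.IsSubgraph G → H.IsTheta →
    ∀ C1 C2 C3, H.CycleSet C1 → H.CycleSet C2 → H.CycleSet C3 →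
      C1 ≠ C2 → C2 ≠ C3 → C1 ≠ C3 → C1 ∈ B → C2 ∈ B → C3 ∈ B

/-! Let `a` be a branch vertex of the theta. Every cycle of the theta passes through `a` and uses
exactly two of the three edges there, so exactly one edge `e` at `a` is missing from `C3`.
Eliminating `e` from the circuits `C1` and `C2` yields a circuit `D` that meets `a` only in edges
of `C3`. By condition (3), no vertex meets exactly one edge of a circuit of a weak framework, since
that edge would be spanned by the edges avoiding the vertex. Walking from `a` along the paths of
the theta, whose inner vertices have degree two, this forces `D ⊆ C3`; and a nonempty subset of a
cycle in which no vertex meets just one of its edges is the whole cycle. Hence `C3 = D`. -/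

lemma eq_pair_of_ncard_eq_two {s : Set β} {x y : β} (hs : s.ncard = 2) (hx : x ∈ s) (hy : y ∈ s)
    (hxy : x ≠ y) : s = {x, y} :=
  (eq_of_subset_of_ncard_le (pair_subset hx hy) (by rw [hs, ncard_pair hxy])
    (finite_of_ncard_ne_zero (by omega))).symm

lemma eq_diag_of_mem_of_isDiag {z : Sym2 α} {v : α} (hv : v ∈ z) (hz : z.IsDiag) :
    z = Sym2.diag v := by
  induction z using Sym2.ind with
  | _ x y =>
    obtain rfl := Sym2.mk_isDiag_iff.mp hz
    obtain rfl := (Sym2.mem_iff.mp hv).elim id id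
    rfl

lemma eq_diag_of_forall_mem {z : Sym2 α} {v : α} (hz : ∀ x ∈ z, x = v) : z = Sym2.diag v := by
  induction z using Sym2.ind with
  | _ x y => rw [hz x (Sym2.mem_mk_left x y), hz y (Sym2.mem_mk_right x y)]; rfl

namespace Graph

variable {α : Type u} {β : Type v} {K H : Graph α β} {C D : Set β} {a b v : α}

def incidenceSet (K : Graph α β) (v : α) : Set β := {e | e ∈ K.E ∧ v ∈ K.ends e}

def linkSet (K : Graph α β) (v : α) : Set β :=
  {e ∈ K.E | v ∈ K.ends e ∧ ¬ (K.ends e).IsDiag}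

def Loopless (K : Graph α β) : Prop := ∀ e ∈ K.E, ¬ (K.ends e).IsDiag

def Leafless (K : Graph α β) (D : Set β) : Prop :=
  ∀ e ∈ D, ∀ v ∈ K.ends e, ∃ f ∈ D, f ≠ e ∧ v ∈ K.ends f

lemma degree_eq (K : Graph α β) (v : α) :
    K.degree v = (K.linkSet v).ncard + 2 * (K.loopsAt v).ncard := rfl

lemma incidenceSet_finite (K : Graph α β) (v : α) : (K.incidenceSet v).Finite :=
  K.finE.subset fun _ he => he.1

lemma incidenceSet_restrictEdges (K : Graph α β) (C : Set β) (v : α) :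
    (K.restrictEdges C).incidenceSet v = C ∩ K.incidenceSet v :=
  ext fun _ => and_assoc

lemma Loopless.degree_eq_ncard (hK : K.Loopless) (v : α) :
    K.degree v = (K.incidenceSet v).ncard := by
  have hlink : K.linkSet v = K.incidenceSet v :=
    ext fun e => ⟨fun he => ⟨he.1, he.2.1⟩, fun he => ⟨he.1, he.2, hK e he.1⟩⟩
  have hloops : K.loopsAt v = ∅ :=
    eq_empty_of_forall_notMem fun e he => hK e he.1 (he.2 ▸ Sym2.diag_isDiag v)
  rw [degree_eq, hlink, hloops, ncard_empty, mul_zero, add_zero]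

lemma Loopless.restrictEdges (hK : K.Loopless) (C : Set β) : (K.restrictEdges C).Loopless :=
  fun e he => hK e he.2

lemma eq_of_isLoopAt (hv : K.degree v ≤ 3) {e f : β} (he : K.IsLoopAt e v)
    (hf : K.IsLoopAt f v) : e = f := by
  have hfin : (K.loopsAt v).Finite := K.finE.subset fun _ he => he.1
  rw [degree_eq] at hv
  exact (ncard_le_one_iff hfin).mp (by omega) he hf

lemma Connected.induction {P : α → Prop} (hK : K.Connected)
    (hP : ∀ e ∈ K.E, ∀ x ∈ K.ends e, P x → ∀ y ∈ K.ends e, P y)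
    {u v : α} (hu : u ∈ K.V) (hv : v ∈ K.V) (hPu : P u) : P v := by
  have huv := hK u hu v hv
  clear hv
  induction huv with
  | refl => exact hPu
  | tail _ hadj ih =>
    obtain ⟨e, he, hends⟩ := hadj
    exact hP e he _ (hends ▸ Sym2.mem_mk_left _ _) ih _ (hends ▸ Sym2.mem_mk_right _ _)

lemma Connected.eq_of_forall_isLoopAt (hK : K.Connected) {x v : α} (hx : x ∈ K.V)
    (hloops : ∀ e ∈ K.E, x ∈ K.ends e → K.ends e = Sym2.diag x) (hv : v ∈ K.V) : v = x := by
  refine hK.induction (P := (· = x)) ?_ hx hv rfl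
  rintro e he _ hy rfl z hz
  rw [hloops e he hy] at hz
  exact (Sym2.mem_iff.mp hz).elim id id

lemma CycleSet.nonempty (hC : K.CycleSet C) : C.Nonempty :=
  let ⟨e, he⟩ := hC.2.1
  ⟨e, he.1⟩

lemma CycleSet.ncard_inter_incidenceSet (hK : K.Loopless) (hC : K.CycleSet C) {e : β}
    (he : e ∈ C) (hv : v ∈ K.ends e) : (C ∩ K.incidenceSet v).ncard = 2 := by
  rw [← incidenceSet_restrictEdges, ← (hK.restrictEdges C).degree_eq_ncard]
  exact hC.2.2.2 v ⟨e, ⟨he, hC.1 he⟩, hv⟩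

lemma CycleSet.incidenceSet_subset (hK : K.Loopless) (hC : K.CycleSet C)
    (hv2 : (K.incidenceSet v).ncard = 2) {e : β} (he : e ∈ C) (hv : v ∈ K.ends e) :
    K.incidenceSet v ⊆ C := by
  have hinter : C ∩ K.incidenceSet v = K.incidenceSet v :=
    eq_of_subset_of_ncard_le inter_subset_right
      (by rw [hC.ncard_inter_incidenceSet hK he hv, hv2]) (K.incidenceSet_finite v)
  exact hinter ▸ inter_subset_left

lemma CycleSet.eq_of_leafless_subset (hK : K.Loopless) (hC : K.CycleSet C) (hDC : D ⊆ C)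
    (hD : D.Nonempty) (hleaf : K.Leafless D) : D = C := by
  have hclosed : ∀ v, (∃ e ∈ D, v ∈ K.ends e) → ∀ g ∈ C, v ∈ K.ends g → g ∈ D := by
    rintro v ⟨e, he, hv⟩ g hg hvg
    obtain ⟨f, hf, hfe, hvf⟩ := hleaf e he v hv
    have hpair : C ∩ K.incidenceSet v = {e, f} :=
      eq_pair_of_ncard_eq_two (hC.ncard_inter_incidenceSet hK (hDC he) hv)
        ⟨hDC he, hC.1 (hDC he), hv⟩ ⟨hDC hf, hC.1 (hDC hf), hvf⟩ hfe.symm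
    have hg' : g ∈ ({e, f} : Set β) := hpair ▸ ⟨hg, hC.1 hg, hvg⟩
    rcases hg' with rfl | rfl
    exacts [he, hf]
  obtain ⟨d, hd⟩ := hD
  have hu := Sym2.out_fst_mem (K.ends d)
  refine hDC.antisymm fun c hc => ?_
  have hw := Sym2.out_fst_mem (K.ends c)
  refine hclosed _ (hC.2.2.1.induction (P := fun x => ∃ e ∈ D, x ∈ K.ends e) ?_
    ⟨d, ⟨hDC hd, hC.1 (hDC hd)⟩, hu⟩ ⟨c, ⟨hc, hC.1 hc⟩, hw⟩ ⟨d, hd, hu⟩) c hc hw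
  rintro g ⟨hg, -⟩ x hx hPx y hy
  exact ⟨g, hclosed x hPx g hg hx, hy⟩

lemma CycleSet.eq_singleton_of_isLoopAt (hC : K.CycleSet C) {e : β} (he : e ∈ C)
    (hloop : K.ends e = Sym2.diag v) : C = {e} := by
  set K' := K.restrictEdges C
  have he' : K'.IsLoopAt e v := ⟨⟨he, hC.1 he⟩, hloop⟩
  have hvK' : v ∈ K'.V := ⟨e, ⟨he, hC.1 he⟩, hloop ▸ Sym2.mem_mk_left v v⟩
  have hdeg : K'.degree v = 2 := hC.2.2.2 v hvK'
  have hlink : K'.linkSet v = ∅ := by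
    have hpos : 0 < (K'.loopsAt v).ncard :=
      (ncard_pos (K'.finE.subset fun _ hf => hf.1)).mpr ⟨e, he'⟩
    rw [degree_eq] at hdeg
    exact (ncard_eq_zero (K'.finE.subset fun _ hf => hf.1)).mp (by omega)
  have hends : ∀ f ∈ K'.E, v ∈ K'.ends f → K'.ends f = Sym2.diag v := by
    intro f hf hvf
    by_contra hne
    exact (eq_empty_iff_forall_notMem.mp hlink) f
      ⟨hf, hvf, fun hdiag => hne (eq_diag_of_mem_of_isDiag hvf hdiag)⟩
  have hV : ∀ u ∈ K'.V, u = v := fun u hu => hC.2.2.1.eq_of_forall_isLoopAt hvK' hends hu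
  refine eq_singleton_iff_unique_mem.mpr ⟨he, fun f hf => ?_⟩
  have hf' : f ∈ K'.E := ⟨hf, hC.1 hf⟩
  exact eq_of_isLoopAt (hdeg.le.trans (by norm_num))
    ⟨hf', eq_diag_of_forall_mem fun x hx => hV x (K'.ends_mem hf' hx)⟩ he'

lemma CycleSet.exists_isLoopAt_of_subset_pair (hC : K.CycleSet C) {x w : α}
    (hV : K.V ⊆ {x, w}) (hx : (K.linkSet x).ncard ≤ 1) :
    ∃ f y, K.IsLoopAt f y ∧ C = {f} := by
  by_cases hloop : ∃ f ∈ C, (K.ends f).IsDiag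
  · obtain ⟨f, hf, hdiag⟩ := hloop
    have hfv := (Sym2.diag_diagElem hdiag).symm
    exact ⟨f, _, ⟨hC.1 hf, hfv⟩, hC.eq_singleton_of_isLoopAt hf hfv⟩
  push Not at hloop
  exfalso
  obtain ⟨f, hf⟩ := hC.nonempty
  have hxf : x ∈ K.ends f := by
    have hmem : ∀ y ∈ K.ends f, y = x ∨ y = w := fun y hy => hV (K.ends_mem (hC.1 hf) hy)
    rcases hmem _ (Sym2.out_fst_mem (K.ends f)) with h | h
    · exact h ▸ Sym2.out_fst_mem _
    · have hother := Sym2.other_ne (hloop f hf) (Sym2.out_fst_mem _)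
      rcases hmem _ (Sym2.other_mem (Sym2.out_fst_mem (K.ends f))) with h' | h'
      · exact h' ▸ Sym2.other_mem _
      · exact absurd (h'.trans h.symm) hother
  set K' := K.restrictEdges C
  have hdeg : K'.degree x = 2 := hC.2.2.2 x ⟨f, ⟨hf, hC.1 hf⟩, hxf⟩
  have hloops : K'.loopsAt x = ∅ :=
    eq_empty_iff_forall_notMem.mpr fun g hg => hloop g hg.1.1 (hg.2 ▸ Sym2.diag_isDiag x)
  have hsub : K'.linkSet x ⊆ K.linkSet x := fun g hg => ⟨hg.1.2, hg.2⟩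
  have := ncard_le_ncard hsub (K.finE.subset fun _ hg => hg.1)
  rw [degree_eq, hloops, ncard_empty] at hdeg
  omega

lemma IsTheta.degree_le_three (hH : H.IsTheta) {v : α} (hv : v ∈ H.V) : H.degree v ≤ 3 := by
  obtain ⟨-, a, -, b, -, -, ha, hb, hdeg⟩ := hH
  by_cases hva : v = a
  · exact (hva ▸ ha).le
  by_cases hvb : v = b
  · exact (hvb ▸ hb).le
  · exact (hdeg v hv hva hvb).trans_le (by norm_num)

/-- An edge `xw` with a loop at each end satisfies `IsTheta` but has only two cycles. -/
lemma IsTheta.loopless (hH : H.IsTheta) {C₁ C₂ C₃ : Set β} (h₁ : H.CycleSet C₁)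
    (h₂ : H.CycleSet C₂) (h₃ : H.CycleSet C₃) (h₁₂ : C₁ ≠ C₂) (h₃₁ : C₃ ≠ C₁)
    (h₃₂ : C₃ ≠ C₂) : H.Loopless := by
  intro e he hdiag
  set x := (H.ends e).diagElem hdiag
  have hex : H.IsLoopAt e x := ⟨he, (Sym2.diag_diagElem hdiag).symm⟩
  have hxV : x ∈ H.V := H.ends_mem he (hex.2 ▸ Sym2.mem_mk_left x x)
  have hdeg := hH.degree_le_three hxV
  -- The loop leaves room for at most one link `xw` at `x`; deleting `w` then isolates `x`, so
  -- `H.V ⊆ {x, w}` and every cycle is a single loop, at `x` or at `w`.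
  have hlink : (H.linkSet x).ncard ≤ 1 := by
    have : 0 < (H.loopsAt x).ncard := (ncard_pos (H.finE.subset fun _ hf => hf.1)).mpr ⟨e, hex⟩
    rw [degree_eq] at hdeg
    omega
  have hloops_of_links_meet : ∀ {X : Set α}, (∀ f ∈ H.linkSet x, ∃ y ∈ H.ends f, y ∈ X) →
      ∀ f ∈ (H.deleteVertices X).E, x ∈ H.ends f → H.ends f = Sym2.diag x := by
    intro X hX f ⟨hf, hfX⟩ hxf
    by_contra hne
    obtain ⟨y, hy, hyX⟩ := hX f ⟨hf, hxf, fun hdiag => hne (eq_diag_of_mem_of_isDiag hxf hdiag)⟩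
    exact hfX y hy hyX
  have hunique : ∀ {f f' y}, H.IsLoopAt f y → H.IsLoopAt f' y → ({f} : Set β) = {f'} :=
    fun hf hf' => congrArg _ (eq_of_isLoopAt
      (hH.degree_le_three (H.ends_mem hf.1 (hf.2 ▸ Sym2.mem_mk_left _ _))) hf hf')
  obtain ⟨hconn, a, ha, b, hb, hab, -⟩ := hH
  obtain ⟨e', he'⟩ : (H.linkSet x).Nonempty := by
    refine nonempty_iff_ne_empty.mpr fun hempty => hab ?_
    have hconn₀ := hconn ∅ (by simp)
    have hloops := hloops_of_links_meet (X := ∅) (by simp [hempty])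
    exact (hconn₀.eq_of_forall_isLoopAt ⟨hxV, id⟩ hloops ⟨ha, id⟩).trans
      (hconn₀.eq_of_forall_isLoopAt ⟨hxV, id⟩ hloops ⟨hb, id⟩).symm
  set w := Sym2.Mem.other he'.2.1
  have hV : H.V ⊆ {x, w} := by
    intro u hu
    by_cases huw : u = w
    · exact Or.inr huw
    have hconn_w := hconn {w} (by rw [encard_singleton]; exact_mod_cast one_lt_two)
    refine Or.inl (hconn_w.eq_of_forall_isLoopAt ⟨hxV, (Sym2.other_ne he'.2.2 he'.2.1).symm⟩ ?_
      ⟨hu, huw⟩)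
    refine hloops_of_links_meet fun f hf => ⟨w, ?_, rfl⟩
    rw [(ncard_le_one_iff (H.finE.subset fun _ hg => hg.1)).mp hlink hf he']
    exact Sym2.other_mem he'.2.1
  obtain ⟨f₁, y₁, hf₁, rfl⟩ := h₁.exists_isLoopAt_of_subset_pair hV hlink
  obtain ⟨f₂, y₂, hf₂, rfl⟩ := h₂.exists_isLoopAt_of_subset_pair hV hlink
  obtain ⟨f₃, y₃, hf₃, rfl⟩ := h₃.exists_isLoopAt_of_subset_pair hV hlink
  have hy : ∀ {f y}, H.IsLoopAt f y → y = x ∨ y = w :=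
    fun hf => hV (H.ends_mem hf.1 (hf.2 ▸ Sym2.mem_mk_left _ _))
  rcases hy hf₁ with rfl | rfl <;> rcases hy hf₂ with h₂ | h₂ <;> rcases hy hf₃ with h₃ | h₃ <;>
    subst h₂ h₃ <;>
    first
    | exact h₁₂ (hunique hf₁ hf₂)
    | exact h₃₁ (hunique hf₃ hf₁)
    | exact h₃₂ (hunique hf₃ hf₂)

structure IsThetaAt (H : Graph α β) (a b : α) : Prop where
  loopless : H.Loopless
  mem_left : a ∈ H.V
  ne : a ≠ b
  connected_deleteVertex : (H.deleteVertex b).Connected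
  ncard_incidenceSet_left : (H.incidenceSet a).ncard = 3
  ncard_incidenceSet_of_ne : ∀ v ∈ H.V, v ≠ a → v ≠ b → (H.incidenceSet v).ncard = 2

lemma IsTheta.exists_isThetaAt (hH : H.IsTheta) (hloopless : H.Loopless) :
    ∃ a b, H.IsThetaAt a b := by
  obtain ⟨hconn, a, ha, b, -, hab, hdega, -, hdeg⟩ := hH
  refine ⟨a, b, hloopless, ha, hab,
    hconn {b} (by rw [encard_singleton]; exact_mod_cast one_lt_two), ?_, fun v hv hva hvb => ?_⟩
  · rw [← hloopless.degree_eq_ncard, hdega]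
  · rw [← hloopless.degree_eq_ncard, hdeg v hv hva hvb]

lemma IsThetaAt.eq_empty_of_closed (hH : H.IsThetaAt a b) {S : Set β} (hS : S ⊆ H.E)
    (ha : ∀ e ∈ S, a ∉ H.ends e)
    (hclosed : ∀ e ∈ S, ∀ v ∈ H.ends e, v ≠ a → v ≠ b → H.incidenceSet v ⊆ S) : S = ∅ := by
  refine eq_empty_iff_forall_notMem.mpr fun d hd => ?_
  obtain ⟨v, hvd, hvb⟩ : ∃ v ∈ H.ends d, v ≠ b := by
    by_cases hxb : (H.ends d).out.1 = b
    · exact ⟨_, Sym2.other_mem _,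
        fun h => Sym2.other_ne (hH.loopless d (hS hd)) (Sym2.out_fst_mem _) (h.trans hxb.symm)⟩
    · exact ⟨_, Sym2.out_fst_mem _, hxb⟩
  have hprop : ∀ g ∈ (H.deleteVertex b).E, ∀ x ∈ H.ends g, (∃ e ∈ S, x ∈ H.ends e) →
      ∀ y ∈ H.ends g, ∃ e ∈ S, y ∈ H.ends e := by
    rintro g ⟨hg, hgb⟩ x hx ⟨e, he, hxe⟩ y hy
    have hxa : x ≠ a := fun h => ha e he (h ▸ hxe)
    exact ⟨g, hclosed e he x hxe hxa (hgb x hx) ⟨hg, hx⟩, hy⟩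
  obtain ⟨e, he, hae⟩ := hH.connected_deleteVertex.induction hprop
    ⟨H.ends_mem (hS hd) hvd, hvb⟩ ⟨hH.mem_left, hH.ne⟩ ⟨d, hd, hvd⟩
  exact ha e he hae

lemma IsThetaAt.inter_incidenceSet_nonempty (hH : H.IsThetaAt a b) (hC : H.CycleSet C) :
    (C ∩ H.incidenceSet a).Nonempty := by
  refine nonempty_iff_ne_empty.mpr fun hempty => ?_
  have hC0 : C = ∅ := hH.eq_empty_of_closed hC.1
    (fun e he hae => (hempty ▸ ⟨he, hC.1 he, hae⟩ : e ∈ (∅ : Set β)))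
    (fun e he v hv hva hvb => hC.incidenceSet_subset hH.loopless
      (hH.ncard_incidenceSet_of_ne v (H.ends_mem (hC.1 he) hv) hva hvb) he hv)
  exact hC.nonempty.ne_empty hC0

lemma IsThetaAt.subset_of_leafless (hH : H.IsThetaAt a b) (hD : D ⊆ H.E) (hleaf : H.Leafless D)
    (hC : H.CycleSet C) (ha : D ∩ H.incidenceSet a ⊆ C) : D ⊆ C := by
  refine sdiff_eq_empty.mp (hH.eq_empty_of_closed (sdiff_subset.trans hD) ?_ ?_)
  · rintro e ⟨he, heC⟩ hae
    exact heC (ha ⟨he, hD he, hae⟩)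
  · rintro e ⟨he, heC⟩ v hv hva hvb g hg
    obtain ⟨f, hf, hfe, hvf⟩ := hleaf e he v hv
    have hv2 := hH.ncard_incidenceSet_of_ne v (H.ends_mem (hD he) hv) hva hvb
    have hfC : f ∉ C := fun hfC => heC (hC.incidenceSet_subset hH.loopless hv2 hfC hvf ⟨hD he, hv⟩)
    rw [eq_pair_of_ncard_eq_two hv2 ⟨hD he, hv⟩ ⟨hD hf, hvf⟩ hfe.symm] at hg
    rcases hg with rfl | rfl
    exacts [⟨he, heC⟩, ⟨hf, hfC⟩]

lemma IsThetaAt.exists_incidenceSet_sdiff_eq_singleton (hH : H.IsThetaAt a b)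
    (hC : H.CycleSet C) : ∃ e, H.incidenceSet a \ C = {e} := by
  obtain ⟨f, hf, -, haf⟩ := hH.inter_incidenceSet_nonempty hC
  rw [← ncard_eq_one, ← sdiff_inter_self_eq_sdiff,
    ncard_sdiff inter_subset_right ((H.incidenceSet_finite a).subset inter_subset_right),
    hH.ncard_incidenceSet_left, hC.ncard_inter_incidenceSet hH.loopless hf haf]

end Graph

lemma isCircuit_iff_matroid_isCircuit {M : Matroid β} {C : Set β} :
    IsCircuit M C ↔ M.IsCircuit C := by
  rw [Matroid.isCircuit_iff_forall_ssubset]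
  rfl

section WeakFramework

variable {G H : Graph α β} {M : Matroid β} {D : Set β}

lemma WeakFramework.exists_ne_mem_ends (h : WeakFramework G M) (hD : M.IsCircuit D) {e : β}
    (he : e ∈ D) (hloop : ¬ (G.ends e).IsDiag) {v : α} (hv : v ∈ G.ends e) :
    ∃ f ∈ D, f ≠ e ∧ v ∈ G.ends f := by
  by_contra! hcon
  have hsub : D \ {e} ⊆ (G.deleteVertex v).E := fun f ⟨hf, hfe⟩ =>
    ⟨h.1 ▸ hD.subset_ground hf, fun x hx hxv => hcon f hf hfe (hxv ▸ hx)⟩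
  have hcl : e ∈ M.closure (G.deleteVertex v).E :=
    M.closure_subset_closure hsub (hD.mem_closure_sdiff_singleton_of_mem he)
  rcases h.2.2 v (G.ends_mem (h.1 ▸ hD.subset_ground he) hv) hcl with he' | he'
  · exact he'.2 v hv rfl
  · exact hloop (he'.2 ▸ Sym2.diag_isDiag v)

lemma WeakFramework.leafless_of_isCircuit (h : WeakFramework G M) (hsub : H.IsSubgraph G)
    (hH : H.Loopless) (hD : M.IsCircuit D) (hDH : D ⊆ H.E) : H.Leafless D := by
  intro e he v hv
  rw [hsub.2.2] at hv ⊢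
  exact h.exists_ne_mem_ends hD he (hsub.2.2 ▸ hH e (hDH he)) hv

end WeakFramework

/-- Let `G` be a weak framework for a matroid `M` and let `H` be a
theta-subgraph of `G`. If two of the three cycles of `H` are balanced (i.e. their edge
sets are circuits of `M`), then so is the third. -/
theorem statement12 {α : Type u} {β : Type v} (G H : Graph α β) (M : Matroid β)
    (h : WeakFramework G M) (hsub : H.IsSubgraph G) (htheta : H.IsTheta)
    (C1 C2 C3 : Set β) (h1 : H.CycleSet C1) (h2 : H.CycleSet C2) (h3 : H.CycleSet C3)
    (h12 : C1 ≠ C2) (h31 : C3 ≠ C1) (h32 : C3 ≠ C2)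
    (b1 : IsCircuit M C1) (b2 : IsCircuit M C2) :
    IsCircuit M C3 := by
  have hloopless := htheta.loopless h1 h2 h3 h12 h31 h32
  obtain ⟨a, b, hH⟩ := htheta.exists_isThetaAt hloopless
  obtain ⟨e, hea⟩ := hH.exists_incidenceSet_sdiff_eq_singleton h3
  rw [isCircuit_iff_matroid_isCircuit] at b1 b2 ⊢
  obtain ⟨D, hD12, hD⟩ := b1.elimination b2 h12 e
  have hDH : D ⊆ H.E := hD12.trans (sdiff_subset.trans (union_subset h1.1 h2.1))
  have hleaf : H.Leafless D := h.leafless_of_isCircuit hsub hloopless hD hDH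
  have hDa : D ∩ H.incidenceSet a ⊆ C3 := by
    rintro f ⟨hfD, hfa⟩
    by_contra hf3
    exact (hD12 hfD).2 (hea ▸ ⟨hfa, hf3⟩)
  have hD3 : D ⊆ C3 := hH.subset_of_leafless hDH hleaf h3 hDa
  rwa [← h3.eq_of_leafless_subset hloopless hD3 hD.nonempty hleaf]

end QuasiGraphicPaper
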